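/- (Theorem: sufficient condition for persistence of excitation.) Let x : [0, ∞) → M be continuous. Suppose there exist T₂ ≥ 0, Δ₂ > 0 and τ₀ > 0 such that for every t ≥ T₂ and each i = 1, …, n, μ({ s ∈ [t, t+Δ₂] : d(x_i, x(s)) ≤ ε }) ≥ τ₀. Then the trajectory x satisfies the finite-dimensional PE-2 condition with constants T₂, Δ₂ and γ₂ = τ₀ θ² / λ̄, where λ̄ is the largest eigenvalue of the Gram matrix G; that is, ∫_t^{t+Δ₂} (g_α(x(τ)))² dτ ≥ (τ₀ θ² / λ̄) αᵀ G α for all t ≥ T₂ and all α ∈ ℝ^n. -/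

import Mathlib

open MeasureTheory Matrix Set

/-- Euclidean norm of a vector in `ℝ^m`. -/
noncomputable def eNorm {m : ℕ} (v : Fin m → ℝ) : ℝ := Real.sqrt (∑ i, v i ^ 2)

/-- The kernel combination `g_α(y) = Σ_i α_i K(x_i, y)`. -/
def gcomb {M : Type*} {n : ℕ} (K : M → M → ℝ) (xc : Fin n → M) (α : Fin n → ℝ) (y : M) : ℝ :=
  ∑ i, α i * K (xc i) y

/-- The matrix `S(y_1,…,y_n)` with entries `S_{ij} = K(x_j, y_i)`. -/
def Smat {M : Type*} {n : ℕ} (K : M → M → ℝ) (xc : Fin n → M) (y : Fin n → M) :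
    Matrix (Fin n) (Fin n) ℝ :=
  Matrix.of fun i j => K (xc j) (y i)

/-- The Gram matrix `G_{ij} = K(x_i, x_j)` of the kernel centers. -/
def Gram {M : Type*} {n : ℕ} (K : M → M → ℝ) (xc : Fin n → M) : Matrix (Fin n) (Fin n) ℝ :=
  Matrix.of fun i j => K (xc i) (xc j)

/-- A kernel is strictly positive definite: symmetric, and the Gram matrix of any finite
collection of pairwise distinct points is positive definite. -/
def StrictlyPD {M : Type*} (K : M → M → ℝ) : Prop :=
  (∀ y z, K y z = K z y) ∧
  ∀ (m : ℕ) (y : Fin m → M), Function.Injective y →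
    (Matrix.of fun i j => K (y i) (y j)).PosDef

/-- The finite-dimensional PE-2 condition with constants `T₂, γ₂, Δ₂`. -/
def PE2 {M : Type*} {n : ℕ} (K : M → M → ℝ) (xc : Fin n → M) (x : ℝ → M)
    (T₂ γ₂ Δ₂ : ℝ) : Prop :=
  ∀ t ≥ T₂, ∀ α : Fin n → ℝ,
    γ₂ * (α ⬝ᵥ (Gram K xc) *ᵥ α) ≤ ∫ τ in Set.Icc t (t + Δ₂), (gcomb K xc α (x τ)) ^ 2

/-!
Near the centers, the matrix `S(y₁, …, yₙ)` is bounded below by `θ`, so it suffices to find, in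
every window, one sampling time `sᵢ` per center with `x(sᵢ)` within `ε` of `xᵢ`, such that
`τ₀ g_α(x(sᵢ))²` is at most the integral of `g_α(x)²` over the times spent near `xᵢ`. Take for `sᵢ`
a minimiser of `g_α(x)²` over that (compact) set of times; since `ε` is less than half the
separation of the centers these sets are disjoint, so summing over `i` gives
`τ₀ θ² ‖α‖² ≤ τ₀ ‖S α‖² ≤ ∫ g_α(x)²`. Finally `αᵀ G α ≤ λ̄ ‖α‖²`.
-/

open Function

open scoped MatrixOrder in
theorem Matrix.IsHermitian.dotProduct_mulVec_le_iSup_eigenvalues_mul {ι : Type*} [Fintype ι]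
    [DecidableEq ι] {A : Matrix ι ι ℝ} (hA : A.IsHermitian) (α : ι → ℝ) :
    α ⬝ᵥ A *ᵥ α ≤ (⨆ i, hA.eigenvalues i) * (α ⬝ᵥ α) := by
  have hle : A ≤ algebraMap ℝ _ (⨆ i, hA.eigenvalues i) := by
    refine le_algebraMap_of_spectrum_le fun r hr => ?_
    rw [hA.spectrum_real_eq_range_eigenvalues] at hr
    obtain ⟨i, rfl⟩ := hr
    exact le_ciSup (finite_range _).bddAbove i
  have := (Matrix.le_iff.mp hle).dotProduct_mulVec_nonneg α
  rw [Algebra.algebraMap_eq_smul_one, sub_mulVec, smul_mulVec, one_mulVec, dotProduct_sub,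
    dotProduct_smul, smul_eq_mul] at this
  simpa using this

theorem Matrix.PosSemidef.div_iSup_eigenvalues_mul_le {ι : Type*} [Fintype ι] [DecidableEq ι]
    {A : Matrix ι ι ℝ} (hA : A.PosSemidef) {c : ℝ} (hc : 0 ≤ c) (α : ι → ℝ) :
    c / (⨆ i, hA.1.eigenvalues i) * (α ⬝ᵥ A *ᵥ α) ≤ c * (α ⬝ᵥ α) := by
  set l := ⨆ i, hA.1.eigenvalues i
  have hl : 0 ≤ l := Real.iSup_nonneg hA.eigenvalues_nonneg
  have hcl : c / l * l ≤ c := by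
    rcases hl.eq_or_lt with h | h
    · simp [← h, hc] -- `c / 0 = 0`; this covers the empty index type
    · rw [div_mul_cancel₀ _ h.ne']
  have hαα : 0 ≤ α ⬝ᵥ α := Finset.sum_nonneg fun i _ => mul_self_nonneg (α i)
  calc c / l * (α ⬝ᵥ A *ᵥ α) ≤ c / l * (l * (α ⬝ᵥ α)) := by
        gcongr
        exact hA.1.dotProduct_mulVec_le_iSup_eigenvalues_mul α
    _ = c / l * l * (α ⬝ᵥ α) := by ring
    _ ≤ c * (α ⬝ᵥ α) := mul_le_mul_of_nonneg_right hcl hαα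

theorem IsCompact.exists_mem_mul_le_setIntegral {X : Type*} [TopologicalSpace X] [T2Space X]
    [MeasurableSpace X] [OpensMeasurableSpace X] {μ : Measure X} [IsFiniteMeasureOnCompacts μ]
    {A : Set X} {f : X → ℝ} {τ : ℝ} (hA : IsCompact A) (hτ : 0 < τ)
    (hμA : ENNReal.ofReal τ ≤ μ A) (hf : ContinuousOn f A) (hf₀ : ∀ x ∈ A, 0 ≤ f x) :
    ∃ s ∈ A, τ * f s ≤ ∫ x in A, f x ∂μ := by
  have hne : A.Nonempty :=
    nonempty_of_measure_ne_zero ((ENNReal.ofReal_pos.2 hτ).trans_le hμA).ne'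
  obtain ⟨s, hs, hmin⟩ := hA.exists_isMinOn hne hf
  have hμA_ne_top : μ A ≠ ⊤ := hA.measure_lt_top.ne
  refine ⟨s, hs, ?_⟩
  calc τ * f s ≤ μ.real A * f s := by
        gcongr
        · exact hf₀ s hs
        · exact (ENNReal.ofReal_le_iff_le_toReal hμA_ne_top).1 hμA
    _ = f s * μ.real A := mul_comm _ _
    _ ≤ ∫ x in A, f x ∂μ :=
        setIntegral_ge_of_const_le_real hA.measurableSet hμA_ne_top (fun x hx => hmin hx)
          (hf.integrableOn_compact hA)

theorem sum_setIntegral_le_setIntegral {X ι : Type*} [MeasurableSpace X] [Fintype ι]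
    {μ : Measure X} {f : X → ℝ} {I : Set X} {A : ι → Set X} (hA : ∀ i, MeasurableSet (A i))
    (hdisj : Pairwise (Disjoint on A)) (hAI : ∀ i, A i ⊆ I) (hf : IntegrableOn f I μ)
    (hf₀ : 0 ≤ᵐ[μ.restrict I] f) :
    ∑ i, ∫ x in A i, f x ∂μ ≤ ∫ x in I, f x ∂μ := by
  rw [← integral_iUnion_fintype hA hdisj fun i => hf.mono_set (hAI i)]
  exact setIntegral_mono_set hf hf₀ (iUnion_subset hAI).eventuallyLE

theorem exists_dist_le_mul_sum_le_integral {M ι : Type*} [PseudoMetricSpace M] [Fintype ι]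
    {c : ι → M} {ε τ a b : ℝ} {x : ℝ → M} {f : ℝ → ℝ}
    (hsep : ∀ i j, i ≠ j → ε < (1 / 2) * dist (c i) (c j))
    (hx : ContinuousOn x (Icc a b)) (hf : ContinuousOn f (Icc a b)) (hf₀ : ∀ s, 0 ≤ f s)
    (hτ : 0 < τ) (hvisit : ∀ i, ENNReal.ofReal τ ≤ volume {s ∈ Icc a b | dist (c i) (x s) ≤ ε}) :
    ∃ s : ι → ℝ, (∀ i, dist (c i) (x (s i)) ≤ ε) ∧
      τ * ∑ i, f (s i) ≤ ∫ s in Icc a b, f s := by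
  set A : ι → Set ℝ := fun i => {s ∈ Icc a b | dist (c i) (x s) ≤ ε}
  have hA : ∀ i, IsCompact (A i) := fun i =>
    isCompact_Icc.of_isClosed_subset
      (((continuous_const.dist continuous_id).comp_continuousOn hx).preimage_isClosed_of_isClosed
        isClosed_Icc isClosed_Iic)
      (sep_subset _ _)
  have hdisj : Pairwise (Disjoint on A) := fun i j hij => by
    have hballs : Disjoint (Metric.closedBall (c i) ε) (Metric.closedBall (c j) ε) :=
      Metric.closedBall_disjoint_closedBall (by linarith [hsep i j hij])
    refine Disjoint.mono ?_ ?_ (hballs.preimage x) <;>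
      exact fun s hs => Metric.mem_closedBall'.2 hs.2
  choose s hsA hs using fun i =>
    (hA i).exists_mem_mul_le_setIntegral hτ (hvisit i) (hf.mono (sep_subset _ _))
      (fun s _ => hf₀ s)
  refine ⟨s, fun i => (hsA i).2, ?_⟩
  calc τ * ∑ i, f (s i) = ∑ i, τ * f (s i) := Finset.mul_sum _ _ _
    _ ≤ ∑ i, ∫ s in A i, f s := Finset.sum_le_sum fun i _ => hs i
    _ ≤ ∫ s in Icc a b, f s :=
        sum_setIntegral_le_setIntegral (fun i => (hA i).measurableSet) hdisj
          (fun i => sep_subset _ _) hf.integrableOn_Icc (ae_of_all _ hf₀)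

section Kernel

variable {M : Type*} {n : ℕ} {K : M → M → ℝ} {xc : Fin n → M}

theorem continuous_gcomb [TopologicalSpace M] (hK : Continuous fun p : M × M => K p.1 p.2)
    (α : Fin n → ℝ) : Continuous (gcomb K xc α) :=
  continuous_finsetSum _ fun _ _ =>
    continuous_const.mul (hK.comp (continuous_const.prodMk continuous_id))

theorem Smat_mulVec_apply (y : Fin n → M) (α : Fin n → ℝ) (i : Fin n) :
    (Smat K xc y *ᵥ α) i = gcomb K xc α (y i) := by
  simp [Smat, mulVec, dotProduct, gcomb, mul_comm]

theorem eNorm_sq {m : ℕ} (v : Fin m → ℝ) : eNorm v ^ 2 = v ⬝ᵥ v := by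
  rw [eNorm, Real.sq_sqrt (Finset.sum_nonneg fun i _ => sq_nonneg (v i))]
  simp only [dotProduct, sq]

theorem sq_mul_dotProduct_le_sum_gcomb_sq {θ : ℝ} (hθ : 0 ≤ θ) {y : Fin n → M}
    {α : Fin n → ℝ} (h : θ * eNorm α ≤ eNorm (Smat K xc y *ᵥ α)) :
    θ ^ 2 * (α ⬝ᵥ α) ≤ ∑ i, gcomb K xc α (y i) ^ 2 := by
  have h2 : (θ * eNorm α) ^ 2 ≤ eNorm (Smat K xc y *ᵥ α) ^ 2 :=
    pow_le_pow_left₀ (mul_nonneg hθ (Real.sqrt_nonneg _)) h 2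
  rw [mul_pow, eNorm_sq, eNorm_sq] at h2
  simpa only [dotProduct, Smat_mulVec_apply, ← sq] using h2

end Kernel

theorem stmt4_general {M : Type*} [MetricSpace M] {n : ℕ}
    (K : M → M → ℝ) (hKcont : Continuous fun p : M × M => K p.1 p.2)
    (hKspd : StrictlyPD K)
    (xc : Fin n → M) (hxc : Function.Injective xc)
    (hG : (Gram K xc).IsHermitian)
    (ε θ : ℝ) (hθ : 0 < θ)
    -- (i) the lower bound on `S(y_1,…,y_n)` for perturbed centers
    (hSbound : ∀ y : Fin n → M, (∀ i, dist (xc i) (y i) ≤ ε) →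
      ∀ α : Fin n → ℝ, θ * eNorm α ≤ eNorm ((Smat K xc y) *ᵥ α))
    -- (ii) `ε` is less than half the minimal pairwise distance between the centers
    (hsep : ∀ i j, i ≠ j → ε < (1 / 2) * dist (xc i) (xc j))
    (x : ℝ → M) (hx : ContinuousOn x (Set.Ici 0))
    (T₂ Δ₂ τ₀ : ℝ) (hT₂ : 0 ≤ T₂) (hτ₀ : 0 < τ₀)
    -- in every window `[t, t+Δ₂]` the trajectory spends time at least `τ₀`
    -- within distance `ε` of each center
    (hvisit : ∀ t ≥ T₂, ∀ i,
      ENNReal.ofReal τ₀ ≤ volume {s ∈ Set.Icc t (t + Δ₂) | dist (xc i) (x s) ≤ ε}) :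
    PE2 K xc x T₂ (τ₀ * θ ^ 2 / (⨆ i, hG.eigenvalues i)) Δ₂ := by
  have hGpsd : (Gram K xc).PosSemidef := (hKspd.2 n xc hxc).posSemidef
  intro t ht α
  have hx' : ContinuousOn x (Icc t (t + Δ₂)) := hx.mono fun s hs => hT₂.trans (ht.trans hs.1)
  obtain ⟨s, hs_near, hs_int⟩ := exists_dist_le_mul_sum_le_integral
    (f := fun τ => gcomb K xc α (x τ) ^ 2) hsep hx'
    (((continuous_gcomb hKcont α).comp_continuousOn hx').pow 2) (fun _ => sq_nonneg _) hτ₀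
    (hvisit t ht)
  have hθα := sq_mul_dotProduct_le_sum_gcomb_sq hθ.le (hSbound (fun i => x (s i)) hs_near α)
  calc τ₀ * θ ^ 2 / (⨆ i, hG.eigenvalues i) * (α ⬝ᵥ Gram K xc *ᵥ α)
      ≤ τ₀ * θ ^ 2 * (α ⬝ᵥ α) := hGpsd.div_iSup_eigenvalues_mul_le (by positivity) α
    _ ≤ τ₀ * ∑ i, gcomb K xc α (x (s i)) ^ 2 := by
        rw [mul_assoc]
        exact mul_le_mul_of_nonneg_left hθα hτ₀.le
    _ ≤ ∫ τ in Icc t (t + Δ₂), gcomb K xc α (x τ) ^ 2 := hs_int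

theorem stmt4 {M : Type*} [MetricSpace M] {n : ℕ} (hn : 0 < n)
    (K : M → M → ℝ) (hKcont : Continuous fun p : M × M => K p.1 p.2)
    (hKspd : StrictlyPD K)
    (xc : Fin n → M) (hxc : Function.Injective xc)
    (hG : (Gram K xc).IsHermitian)
    (ε θ : ℝ) (hε : 0 < ε) (hθ : 0 < θ)
    -- (i) the lower bound on `S(y_1,…,y_n)` for perturbed centers
    (hSbound : ∀ y : Fin n → M, (∀ i, dist (xc i) (y i) ≤ ε) →
      ∀ α : Fin n → ℝ, θ * eNorm α ≤ eNorm ((Smat K xc y) *ᵥ α))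
    -- (ii) `ε` is less than half the minimal pairwise distance between the centers
    (hsep : ∀ i j, i ≠ j → ε < (1 / 2) * dist (xc i) (xc j))
    -- (iii) the closed balls of radius `ε` about the centers are compact and connected
    (hball : ∀ i, IsCompact (Metric.closedBall (xc i) ε) ∧
      IsConnected (Metric.closedBall (xc i) ε))
    (x : ℝ → M) (hx : ContinuousOn x (Set.Ici 0))
    (T₂ Δ₂ τ₀ : ℝ) (hT₂ : 0 ≤ T₂) (hΔ₂ : 0 < Δ₂) (hτ₀ : 0 < τ₀)
    -- in every window `[t, t+Δ₂]` the trajectory spends time at least `τ₀`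
    -- within distance `ε` of each center
    (hvisit : ∀ t ≥ T₂, ∀ i,
      ENNReal.ofReal τ₀ ≤ volume {s ∈ Set.Icc t (t + Δ₂) | dist (xc i) (x s) ≤ ε}) :
    PE2 K xc x T₂ (τ₀ * θ ^ 2 / (⨆ i, hG.eigenvalues i)) Δ₂ :=
  stmt4_general K hKcont hKspd xc hxc hG ε θ hθ hSbound hsep x hx T₂ Δ₂ τ₀ hT₂ hτ₀ hvisit
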